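/- Fix H > 0 with H ≠ 1/2 and define c_H(a,b) := ∫₀^{min(a,b)} (a−u)^{H−1/2} (b−u)^{H−1/2} du for a, b > 0, and write θ_{ij}(τ) := c_H(τ^i, τ^j). Then, as τ ↘ 0, (θ₁₃(τ) θ₂₂(τ) − θ₁₂(τ) θ₂₃(τ)) / (θ₂₂(τ) θ₃₃(τ) − θ₂₃(τ)²) ∼ (4H(1−2H)/(2H+1)²) · τ^{1−2H}. In particular, this ratio is nonzero for all sufficiently small τ > 0. -/

import Mathlib

open MeasureTheory Set Filter intervalIntegral

/-- Covariance function of the Riemann–Liouville process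
`Y_t = ∫₀ᵗ (t−s)^{H−1/2} dB_s`. -/
noncomputable def cH (H a b : ℝ) : ℝ :=
  ∫ u in (0:ℝ)..(min a b), (a - u) ^ (H - 1/2) * (b - u) ^ (H - 1/2)

open Topology

/-!
For `0 ≤ u ≤ b < a` the factor `(a - u)^{H-1/2}` of the integrand lies between `(a - b)^{H-1/2}`
and `a^{H-1/2}`, so `c_H(a, b) ∼ a^{H-1/2} b^{H+1/2} / (H + 1/2)` as `b / a → 0`, while
`c_H(a, a) = a^{2H} / (2H)` exactly. With `θ_{ij} = c_H(τ^i, τ^j)` the numerator of the ratio is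
then `τ^{8H+1}` times `1/(2H(H+1/2)) - 1/(H+1/2)² + o(1) = (1-2H)/(4H(H+1/2)²) + o(1)`, and the
denominator is `τ^{10H}` times `1/(4H²) + o(1)`, since `θ₂₃²` is smaller than `θ₂₂θ₃₃` by a
factor `τ`.
-/

lemma integral_sub_rpow {p : ℝ} (hp : -1 < p) (b : ℝ) :
    ∫ u in (0:ℝ)..b, (b - u) ^ p = b ^ (p + 1) / (p + 1) := by
  rw [intervalIntegral.integral_comp_sub_left (fun x : ℝ => x ^ p) b, sub_self, sub_zero,
    integral_rpow (Or.inl hp), Real.zero_rpow (by linarith), sub_zero]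

lemma cH_self {H a : ℝ} (hH : 0 < H) (ha : 0 ≤ a) : cH H a a = a ^ (2 * H) / (2 * H) := by
  have hsq : ∀ u ∈ uIcc 0 a, (a - u) ^ (H - 1/2) * (a - u) ^ (H - 1/2) = (a - u) ^ (2 * H - 1) := by
    intro u hu
    rw [uIcc_of_le ha] at hu
    rw [← sq, ← Real.rpow_natCast, ← Real.rpow_mul (by linarith [hu.2])]
    ring_nf
  rw [cH, min_self, integral_congr hsq, integral_sub_rpow (by linarith)]
  norm_num

lemma Real.rpow_mem_uIcc {x c d : ℝ} (hc : 0 < c) (hx : x ∈ Icc c d) (p : ℝ) :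
    x ^ p ∈ uIcc (c ^ p) (d ^ p) := by
  rcases le_total 0 p with hp | hp
  · exact Icc_subset_uIcc ⟨Real.rpow_le_rpow hc.le hx.1 hp,
      Real.rpow_le_rpow (hc.le.trans hx.1) hx.2 hp⟩
  · exact Icc_subset_uIcc' ⟨Real.rpow_le_rpow_of_nonpos (hc.trans_le hx.1) hx.2 hp,
      Real.rpow_le_rpow_of_nonpos hc hx.1 hp⟩

lemma cH_div_mem_uIcc {H a b : ℝ} (hH : 0 < H) (hb : 0 < b) (hba : b < a) :
    cH H a b / (b ^ (H + 1/2) / (H + 1/2)) ∈ uIcc ((a - b) ^ (H - 1/2)) (a ^ (H - 1/2)) := by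
  have hp : -1 < H - 1/2 := by linarith
  have hq : H + 1/2 = H - 1/2 + 1 := by ring
  set p := H - 1/2
  have hbu : IntervalIntegrable (fun u => (b - u) ^ p) volume 0 b := by
    simpa using ((intervalIntegrable_rpow' (a := 0) (b := b) hp).comp_sub_left b).symm
  have hfactor : ∀ u ∈ Icc 0 b, (a - u) ^ p ∈ uIcc ((a - b) ^ p) (a ^ p) := fun u hu =>
    Real.rpow_mem_uIcc (by linarith) ⟨by linarith [hu.2], by linarith [hu.1]⟩ p
  have hcont : ContinuousOn (fun u => (a - u) ^ p) (uIcc 0 b) := by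
    refine ContinuousOn.rpow_const (by fun_prop) fun u hu => Or.inl ?_
    rw [uIcc_of_le hb.le] at hu
    linarith [hu.2]
  have hint : IntervalIntegrable (fun u => (a - u) ^ p * (b - u) ^ p) volume 0 b :=
    hbu.continuousOn_mul hcont
  have hmass : 0 < b ^ (H + 1/2) / (H + 1/2) := by positivity
  have hbound : ∀ c, ∫ u in (0:ℝ)..b, c * (b - u) ^ p = c * (b ^ (H + 1/2) / (H + 1/2)) := by
    intro c
    rw [intervalIntegral.integral_const_mul, integral_sub_rpow hp, hq]
  rw [cH, min_eq_right hba.le, uIcc, mem_Icc, le_div_iff₀ hmass, div_le_iff₀ hmass,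
    ← hbound, ← hbound]
  exact ⟨integral_mono_on hb.le (hbu.const_mul _) hint fun u hu =>
      mul_le_mul_of_nonneg_right (hfactor u hu).1 (Real.rpow_nonneg (by linarith [hu.2]) p),
    integral_mono_on hb.le hint (hbu.const_mul _) fun u hu =>
      mul_le_mul_of_nonneg_right (hfactor u hu).2 (Real.rpow_nonneg (by linarith [hu.2]) p)⟩

noncomputable def cHLeading (H a b : ℝ) : ℝ := a ^ (H - 1/2) * (b ^ (H + 1/2) / (H + 1/2))

lemma tendsto_cH_div_cHLeading {α : Type*} {l : Filter α} {H : ℝ} {a b : α → ℝ} (hH : 0 < H)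
    (hpos : ∀ᶠ x in l, 0 < b x ∧ b x < a x) (hlim : Tendsto (fun x => b x / a x) l (𝓝 0)) :
    Tendsto (fun x => cH H (a x) (b x) / cHLeading H (a x) (b x)) l (𝓝 1) := by
  set s := fun x => (1 - b x / a x) ^ (H - 1/2)
  have hs : Tendsto s l (𝓝 1) := by
    have h := (tendsto_const_nhds (x := (1:ℝ))).sub hlim
    rw [sub_zero] at h
    have h' := h.rpow_const (p := H - 1/2) (Or.inl one_ne_zero)
    rwa [Real.one_rpow] at h'
  have hbounds : ∀ᶠ x in l, cH H (a x) (b x) / cHLeading H (a x) (b x) ∈ uIcc (s x) 1 := by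
    filter_upwards [hpos] with x ⟨hb, hba⟩
    have ha : 0 < a x := hb.trans hba
    rw [cHLeading]
    set A := a x ^ (H - 1/2)
    have hA : A ≠ 0 := (Real.rpow_pos_of_pos ha _).ne'
    have hsub : (a x - b x) ^ (H - 1/2) = A * s x := by
      rw [← Real.mul_rpow ha.le (by rw [sub_nonneg, div_le_one ha]; exact hba.le)]
      congr 1
      field_simp
    have h : A * (cH H (a x) (b x) / (A * (b x ^ (H + 1/2) / (H + 1/2)))) ∈ uIcc (A * s x) A := by
      rw [← hsub, mul_div_assoc', mul_div_mul_left _ _ hA]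
      exact cH_div_mem_uIcc hH hb hba
    have h' : cH H (a x) (b x) / (A * (b x ^ (H + 1/2) / (H + 1/2))) ∈ (A * ·) ⁻¹' uIcc (A * s x) A := h
    rwa [preimage_const_mul_uIcc hA, mul_div_cancel_left₀ _ hA, div_self hA] at h'
  have hmin : Tendsto (fun x => min (s x) 1) l (𝓝 1) := by
    simpa using hs.min (tendsto_const_nhds (x := (1:ℝ)))
  have hmax : Tendsto (fun x => max (s x) 1) l (𝓝 1) := by
    simpa using hs.max (tendsto_const_nhds (x := (1:ℝ)))
  exact tendsto_of_tendsto_of_tendsto_of_le_of_le' hmin hmax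
    (hbounds.mono fun x hx => hx.1) (hbounds.mono fun x hx => hx.2)

lemma cHLeading_pow {H τ : ℝ} (hτ : 0 ≤ τ) (i j : ℕ) :
    cHLeading H (τ ^ i) (τ ^ j) = (τ ^ (H - 1/2)) ^ i * (τ ^ (H + 1/2)) ^ j / (H + 1/2) := by
  rw [cHLeading, ← Real.rpow_pow_comm hτ, ← Real.rpow_pow_comm hτ, mul_div_assoc]

noncomputable def cHRatio (H : ℝ) (i j : ℕ) (τ : ℝ) : ℝ :=
  cH H (τ ^ i) (τ ^ j) / cHLeading H (τ ^ i) (τ ^ j)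

lemma tendsto_cHRatio {H : ℝ} (hH : 0 < H) {i j : ℕ} (hij : i < j) :
    Tendsto (cHRatio H i j) (𝓝[>] 0) (𝓝 1) := by
  have hunit : ∀ᶠ τ in 𝓝[>] (0:ℝ), τ ∈ Ioo 0 1 := Ioo_mem_nhdsGT one_pos
  refine tendsto_cH_div_cHLeading hH (hunit.mono fun τ hτ =>
    ⟨pow_pos hτ.1 j, pow_lt_pow_right_of_lt_one₀ hτ.1 hτ.2 hij⟩) ?_
  have hpow : Tendsto (fun τ : ℝ => τ ^ (j - i)) (𝓝[>] 0) (𝓝 0) := by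
    simpa [zero_pow (Nat.sub_ne_zero_of_lt hij)] using
      ((continuous_pow (j - i)).tendsto (0:ℝ)).mono_left nhdsWithin_le_nhds
  refine hpow.congr' (hunit.mono fun τ hτ => ?_)
  rw [eq_div_iff (pow_pos hτ.1 i).ne', ← pow_add, Nat.sub_add_cancel hij.le]

/- With `x = τ^{H-1/2}` and `y = τ^{H+1/2} = x τ`, the covariances are `θ₂₂ = (xy)²/(2H)`,
`θ₃₃ = (xy)³/(2H)` and `θ_{ij} = r_{ij} xⁱ yʲ / q` with `q = H + 1/2`. -/
lemma conditionalMean_rescale {H q x y t r₁₂ r₁₃ r₂₃ : ℝ} (hH : H ≠ 0) (hq : q ≠ 0)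
    (hx : x ≠ 0) (ht : t ≠ 0) (hy : y = x * t) :
    ((r₁₃ * (x * y ^ 3 / q)) * ((x * y) ^ 2 / (2 * H))
        - (r₁₂ * (x * y ^ 2 / q)) * (r₂₃ * (x ^ 2 * y ^ 3 / q))) /
      ((x * y) ^ 2 / (2 * H) * ((x * y) ^ 3 / (2 * H)) - (r₂₃ * (x ^ 2 * y ^ 3 / q)) ^ 2) =
    (x ^ 2)⁻¹ *
      ((r₁₃ / (2 * H * q) - r₁₂ * r₂₃ / q ^ 2) / (1 / (4 * H ^ 2) - r₂₃ ^ 2 * t / q ^ 2)) := by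
  subst hy
  set F := r₁₃ / (2 * H * q) - r₁₂ * r₂₃ / q ^ 2
  set E := 1 / (4 * H ^ 2) - r₂₃ ^ 2 * t / q ^ 2
  have hnum : (r₁₃ * (x * (x * t) ^ 3 / q)) * ((x * (x * t)) ^ 2 / (2 * H))
        - (r₁₂ * (x * (x * t) ^ 2 / q)) * (r₂₃ * (x ^ 2 * (x * t) ^ 3 / q)) =
      x ^ 8 * t ^ 5 * F := by
    simp only [F]; field_simp
  have hden : (x * (x * t)) ^ 2 / (2 * H) * ((x * (x * t)) ^ 3 / (2 * H))
        - (r₂₃ * (x ^ 2 * (x * t) ^ 3 / q)) ^ 2 = x ^ 8 * t ^ 5 * (x ^ 2 * E) := by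
    simp only [E]; field_simp; ring
  rw [hnum, hden, mul_div_mul_left _ _ (by positivity), div_mul_eq_div_div, inv_mul_eq_div,
    div_right_comm]

noncomputable def rescaledConditionalMean (H τ : ℝ) : ℝ :=
  (cHRatio H 1 3 τ / (2 * H * (H + 1/2)) - cHRatio H 1 2 τ * cHRatio H 2 3 τ / (H + 1/2) ^ 2) /
    (1 / (4 * H ^ 2) - cHRatio H 2 3 τ ^ 2 * τ / (H + 1/2) ^ 2)

lemma conditionalMean_eq_rpow_mul_rescaled {H τ : ℝ} (hH : 0 < H) (hτ : 0 < τ) :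
    (cH H τ (τ ^ 3) * cH H (τ ^ 2) (τ ^ 2) - cH H τ (τ ^ 2) * cH H (τ ^ 2) (τ ^ 3)) /
      (cH H (τ ^ 2) (τ ^ 2) * cH H (τ ^ 3) (τ ^ 3) - (cH H (τ ^ 2) (τ ^ 3)) ^ 2) =
    τ ^ ((1 : ℝ) - 2 * H) * rescaledConditionalMean H τ := by
  have hy : τ ^ (H + 1/2) = τ ^ (H - 1/2) * τ := by
    rw [← Real.rpow_add_one hτ.ne']; ring_nf
  have hexp : τ ^ ((1 : ℝ) - 2 * H) = ((τ ^ (H - 1/2)) ^ 2)⁻¹ := by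
    rw [← Real.rpow_natCast, ← Real.rpow_mul hτ.le, ← Real.rpow_neg hτ.le]; ring_nf
  have hdiag : ∀ n : ℕ,
      cH H (τ ^ n) (τ ^ n) = (τ ^ (H - 1/2) * τ ^ (H + 1/2)) ^ n / (2 * H) := by
    intro n
    rw [cH_self hH (by positivity), ← Real.rpow_add hτ, ← Real.rpow_pow_comm hτ.le]; ring_nf
  have hoff : ∀ i j : ℕ, cH H (τ ^ i) (τ ^ j) =
      cHRatio H i j τ * ((τ ^ (H - 1/2)) ^ i * (τ ^ (H + 1/2)) ^ j / (H + 1/2)) := by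
    intro i j
    rw [← cHLeading_pow hτ.le, cHRatio, div_mul_cancel₀]
    rw [cHLeading_pow hτ.le]
    positivity
  have h13 := hoff 1 3
  have h12 := hoff 1 2
  simp only [pow_one] at h13 h12
  rw [hdiag 2, hdiag 3, h13, h12, hoff 2 3, hexp]
  exact conditionalMean_rescale hH.ne' (by positivity) (Real.rpow_pos_of_pos hτ _).ne' hτ.ne' hy

lemma tendsto_rescaledConditionalMean {H : ℝ} (hH : 0 < H) :
    Tendsto (rescaledConditionalMean H) (𝓝[>] 0) (𝓝 (4 * H * (1 - 2 * H) / (2 * H + 1) ^ 2)) := by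
  have hr : ∀ {i j : ℕ}, i < j → Tendsto (cHRatio H i j) (𝓝[>] 0) (𝓝 1) := tendsto_cHRatio hH
  have hτ : Tendsto (fun τ : ℝ => τ) (𝓝[>] 0) (𝓝 0) :=
    tendsto_nhdsWithin_of_tendsto_nhds tendsto_id
  have hden : 1 / (4 * H ^ 2) - 1 ^ 2 * 0 / (H + 1/2) ^ 2 ≠ 0 := by
    simpa using hH.ne'
  have h := ((hr (by norm_num : 1 < 3)).div_const (2 * H * (H + 1/2)) |>.sub
    (((hr (by norm_num : 1 < 2)).mul (hr (by norm_num : 2 < 3))).div_const ((H + 1/2) ^ 2))).div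
    (tendsto_const_nhds.sub ((((hr (by norm_num : 2 < 3)).pow 2).mul hτ).div_const _)) hden
  have hvalue : (1 / (2 * H * (H + 1/2)) - 1 * 1 / (H + 1/2) ^ 2) /
      (1 / (4 * H ^ 2) - 1 ^ 2 * 0 / (H + 1/2) ^ 2) = 4 * H * (1 - 2 * H) / (2 * H + 1) ^ 2 := by
    have hq : H + 1/2 ≠ 0 := by positivity
    field_simp
    ring
  rw [hvalue] at h
  exact h

/-- With `θ_{ij}(τ) = c_H(τ^i, τ^j)`, the conditional Gaussian mean
`(θ₁₃θ₂₂ − θ₁₂θ₂₃)/(θ₂₂θ₃₃ − θ₂₃²)` is asymptotic to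
`(4H(1−2H)/(2H+1)²) τ^{1−2H}` as `τ ↘ 0`; in particular it is nonzero for
all sufficiently small `τ > 0`. -/
theorem stmt_12 (H : ℝ) (hH : 0 < H) (hH' : H ≠ 1/2) :
    Filter.Tendsto (fun τ : ℝ =>
        ((cH H τ (τ ^ 3) * cH H (τ ^ 2) (τ ^ 2)
            - cH H τ (τ ^ 2) * cH H (τ ^ 2) (τ ^ 3)) /
          (cH H (τ ^ 2) (τ ^ 2) * cH H (τ ^ 3) (τ ^ 3)
            - (cH H (τ ^ 2) (τ ^ 3)) ^ 2)) /
          ((4 * H * (1 - 2 * H) / (2 * H + 1) ^ 2) * τ ^ ((1 : ℝ) - 2 * H)))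
      (nhdsWithin 0 (Set.Ioi 0)) (nhds 1) ∧
    ∀ᶠ τ in nhdsWithin (0 : ℝ) (Set.Ioi 0),
      (cH H τ (τ ^ 3) * cH H (τ ^ 2) (τ ^ 2)
          - cH H τ (τ ^ 2) * cH H (τ ^ 2) (τ ^ 3)) /
        (cH H (τ ^ 2) (τ ^ 2) * cH H (τ ^ 3) (τ ^ 3)
          - (cH H (τ ^ 2) (τ ^ 3)) ^ 2) ≠ 0 := by
  set C := 4 * H * (1 - 2 * H) / (2 * H + 1) ^ 2
  have hC : C ≠ 0 := div_ne_zero (mul_ne_zero (by positivity)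
    (sub_ne_zero.mpr fun h => hH' (by linarith))) (by positivity)
  have hmain : Tendsto (fun τ : ℝ =>
      ((cH H τ (τ ^ 3) * cH H (τ ^ 2) (τ ^ 2) - cH H τ (τ ^ 2) * cH H (τ ^ 2) (τ ^ 3)) /
        (cH H (τ ^ 2) (τ ^ 2) * cH H (τ ^ 3) (τ ^ 3) - (cH H (τ ^ 2) (τ ^ 3)) ^ 2)) /
        (C * τ ^ ((1 : ℝ) - 2 * H))) (𝓝[>] 0) (𝓝 1) := by
    have h := (tendsto_rescaledConditionalMean hH).div_const C
    rw [div_self hC] at h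
    refine h.congr' (eventually_mem_nhdsWithin.mono fun τ (hτ : 0 < τ) => ?_)
    dsimp only
    rw [conditionalMean_eq_rpow_mul_rescaled hH hτ, mul_comm C,
      mul_div_mul_left _ _ (Real.rpow_pos_of_pos hτ _).ne']
  refine ⟨hmain, (hmain.eventually_ne one_ne_zero).mono fun τ hτ h0 => hτ ?_⟩
  rw [h0, zero_div]
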